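/- Let d ≥ 1 and let L = {L_i}_{i=1}^{d²} be a measure basis for d×d complex matrices with all weights l_i = tr L_i strictly positive. Set σ_i := L_i/l_i, and let λ^max_i and λ^min_i be the maximum and minimum eigenvalues of σ_i; assume λ^min_i < 1/d < λ^max_i for every i. Then for nonzero real t, every L^t_i := t·L_i + (1−t)·(l_i/d)·I is positive semidefinite (i.e. L^t is a MIC) if and only if max_i { 1/(1 − d·λ^max_i) } ≤ t ≤ min_i { 1/(1 − d·λ^min_i) }. -/

import Mathlib

open Matrix BigOperators
open scoped ComplexOrder Kronecker

/-- A measure basis: a linearly independent family of `d²` Hermitian `d×d` complex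
matrices summing to the identity, with nonnegative traces. -/
def IsMeasureBasis {d : ℕ} (L : Fin (d ^ 2) → Matrix (Fin d) (Fin d) ℂ) : Prop :=
  (∀ i, (L i).IsHermitian) ∧ LinearIndependent ℝ L ∧ (∑ i, L i) = 1 ∧ ∀ i, 0 ≤ ((L i).trace).re

/-- A Wigner basis: an orthogonal measure basis. -/
def IsWignerBasis {d : ℕ} (L : Fin (d ^ 2) → Matrix (Fin d) (Fin d) ℂ) : Prop :=
  IsMeasureBasis L ∧ ∀ i j, i ≠ j → (L i * L j).trace = 0

/-- The rescaled frame operator `S_L(X) = ∑ⱼ (tr(X Lⱼ)/lⱼ) Lⱼ`. -/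
noncomputable def rsFrameOp {n : Type*} [Fintype n] {m : Type*} [Fintype m] [DecidableEq m]
    (L : n → Matrix m m ℂ) (X : Matrix m m ℂ) : Matrix m m ℂ :=
  ∑ j, (((X * L j).trace) / ((L j).trace)) • L j

/-- A map on matrices that is ℝ-linear, Hermiticity-preserving, self-adjoint with respect to
the Hilbert–Schmidt inner product on Hermitian matrices, and positive. -/
def IsPosSelfAdjMap {m : Type*} [Fintype m]
    (T : Matrix m m ℂ → Matrix m m ℂ) : Prop :=
  IsLinearMap ℝ T ∧ (∀ X, X.IsHermitian → (T X).IsHermitian) ∧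
  (∀ X Y, X.IsHermitian → Y.IsHermitian → (T X * Y).trace = (X * T Y).trace) ∧
  (∀ X, X.IsHermitian → 0 ≤ ((X * T X).trace).re)

/-- `T` is the (unique) positive self-adjoint inverse square root of the rescaled frame
operator of `L`, i.e. `S_L ∘ T ∘ T = id` on Hermitian matrices; `PW(L) i = T (L i)`. -/
def IsInvSqrtOfFrameOp {n : Type*} [Fintype n] {m : Type*} [Fintype m] [DecidableEq m]
    (L : n → Matrix m m ℂ) (T : Matrix m m ℂ → Matrix m m ℂ) : Prop :=
  IsPosSelfAdjMap T ∧ ∀ X : Matrix m m ℂ, X.IsHermitian → rsFrameOp L (T (T X)) = X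

/-! Writing `Lᵢ = lᵢ σᵢ`, the matrix `Lᵗᵢ = t lᵢ σᵢ + (1 - t)(lᵢ/d) I` is diagonalised together
with `σᵢ`, with eigenvalues `(lᵢ/d)(1 - t(1 - dλ))` for `λ` in the spectrum of `σᵢ`. Positivity is
thus the constraint `t(1 - dλ) ≤ 1`, affine in `λ`, so it only needs checking at `λᵢᵐᵃˣ` and
`λᵢᵐⁱⁿ`; there `1 - dλ` is negative, resp. positive, and dividing by it gives the two bounds
on `t`. -/

lemma forall_nonneg_mul_add_iff_sup'_inf' {ι R : Type*} [Fintype ι] [Nonempty ι] [Ring R]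
    [LinearOrder R] [IsStrictOrderedRing R] (f : ι → R) (a c : R) :
    (∀ j, 0 ≤ a * f j + c) ↔
      0 ≤ a * Finset.univ.sup' Finset.univ_nonempty f + c ∧
        0 ≤ a * Finset.univ.inf' Finset.univ_nonempty f + c := by
  obtain ⟨jmax, -, hjmax⟩ := Finset.exists_mem_eq_sup' Finset.univ_nonempty f
  obtain ⟨jmin, -, hjmin⟩ := Finset.exists_mem_eq_inf' Finset.univ_nonempty f
  refine ⟨fun h => ⟨hjmax ▸ h jmax, hjmin ▸ h jmin⟩, fun ⟨hmax, hmin⟩ j => ?_⟩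
  rcases le_total 0 a with ha | ha
  · exact hmin.trans <| add_le_add_left
      (mul_le_mul_of_nonneg_left (Finset.inf'_le f (Finset.mem_univ j)) ha) c
  · exact hmax.trans <| add_le_add_left
      (mul_le_mul_of_nonpos_left (Finset.le_sup' f (Finset.mem_univ j)) ha) c

lemma collinear_eigenvalue_nonneg_iff {d l t x : ℝ} (hd : 0 < d) (hl : 0 < l) :
    0 ≤ t * l * x + (1 - t) * l / d ↔ t * (1 - d * x) ≤ 1 := by
  have : t * l * x + (1 - t) * l / d = l / d * (1 - t * (1 - d * x)) := by
    field_simp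
    ring
  rw [this, mul_nonneg_iff_of_pos_left (div_pos hl hd), sub_nonneg]

namespace Matrix.IsHermitian

variable {n : Type*} [Fintype n] [DecidableEq n] {A : Matrix n n ℂ}

lemma posSemidef_smul_add_smul_one_iff (hA : A.IsHermitian) (a c : ℝ) :
    (a • A + c • (1 : Matrix n n ℂ)).PosSemidef ↔ ∀ j, 0 ≤ a * hA.eigenvalues j + c := by
  have hdiag : a • A + c • (1 : Matrix n n ℂ) = Unitary.conjStarAlgAut ℂ _ hA.eigenvectorUnitary
      (diagonal fun j => ((a * hA.eigenvalues j + c : ℝ) : ℂ)) := by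
    have : (diagonal fun j => ((a * hA.eigenvalues j + c : ℝ) : ℂ)) =
        (a : ℂ) • diagonal (RCLike.ofReal ∘ hA.eigenvalues) + (c : ℂ) • 1 := by
      rw [← diagonal_one, ← diagonal_smul, ← diagonal_smul, diagonal_add]
      congr 1
      ext j
      simp
    conv_lhs => rw [hA.spectral_theorem]
    rw [this, map_add, map_smul, map_smul, map_one, ← Complex.coe_smul, ← Complex.coe_smul]
  rw [hdiag, Unitary.conjStarAlgAut_apply, Unitary.isUnit_coe.posSemidef_star_right_conjugate_iff,
    posSemidef_diagonal_iff]
  exact forall_congr' fun j => Complex.zero_le_real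

variable [Nonempty n]

lemma posSemidef_collinear_iff (hA : A.IsHermitian) {d l : ℝ} (hd : 0 < d) (hl : 0 < l)
    (hmin : Finset.univ.inf' Finset.univ_nonempty hA.eigenvalues < d⁻¹)
    (hmax : d⁻¹ < Finset.univ.sup' Finset.univ_nonempty hA.eigenvalues) (t : ℝ) :
    ((t * l) • A + ((1 - t) * l / d) • (1 : Matrix n n ℂ)).PosSemidef ↔
      (1 - d * Finset.univ.sup' Finset.univ_nonempty hA.eigenvalues)⁻¹ ≤ t ∧
        t ≤ (1 - d * Finset.univ.inf' Finset.univ_nonempty hA.eigenvalues)⁻¹ := by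
  have hneg : 1 - d * Finset.univ.sup' Finset.univ_nonempty hA.eigenvalues < 0 := by
    rw [sub_neg, ← inv_lt_iff_one_lt_mul₀' hd]
    exact hmax
  have hpos : 0 < 1 - d * Finset.univ.inf' Finset.univ_nonempty hA.eigenvalues := by
    rw [sub_pos, ← lt_inv_mul_iff₀ hd, mul_one]
    exact hmin
  rw [hA.posSemidef_smul_add_smul_one_iff, forall_nonneg_mul_add_iff_sup'_inf',
    collinear_eigenvalue_nonneg_iff hd hl, collinear_eigenvalue_nonneg_iff hd hl,
    ← one_div, ← one_div, div_le_iff_of_neg hneg, le_div_iff₀ hpos]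

end Matrix.IsHermitian

theorem collinear_mic_interval {d : ℕ} [NeZero d]
    (L : Fin (d ^ 2) → Matrix (Fin d) (Fin d) ℂ)
    (hpos : ∀ i, 0 < ((L i).trace).re)
    (σ : Fin (d ^ 2) → Matrix (Fin d) (Fin d) ℂ)
    (hσdef : ∀ i, σ i = ((((L i).trace).re)⁻¹ : ℝ) • L i)
    (hσ : ∀ i, (σ i).IsHermitian)
    (lamMax lamMin : Fin (d ^ 2) → ℝ)
    (hlamMax : ∀ i, lamMax i = Finset.univ.sup' Finset.univ_nonempty ((hσ i).eigenvalues))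
    (hlamMin : ∀ i, lamMin i = Finset.univ.inf' Finset.univ_nonempty ((hσ i).eigenvalues))
    (hgap : ∀ i, lamMin i < (d : ℝ)⁻¹ ∧ (d : ℝ)⁻¹ < lamMax i)
    (t : ℝ)
    (Lt : Fin (d ^ 2) → Matrix (Fin d) (Fin d) ℂ)
    (hLt : ∀ i, Lt i = t • L i +
      (((1 - t) * ((L i).trace).re / (d : ℝ)) • (1 : Matrix (Fin d) (Fin d) ℂ))) :
    (∀ i, (Lt i).PosSemidef) ↔
      (Finset.univ.sup' Finset.univ_nonempty (fun i => (1 - (d : ℝ) * lamMax i)⁻¹) ≤ t ∧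
       t ≤ Finset.univ.inf' Finset.univ_nonempty (fun i => (1 - (d : ℝ) * lamMin i)⁻¹)) := by
  have hd : (0 : ℝ) < d := Nat.cast_pos.mpr (NeZero.pos d)
  have hLt_σ : ∀ i, Lt i = (t * ((L i).trace).re) • σ i +
      (((1 - t) * ((L i).trace).re / (d : ℝ)) • (1 : Matrix (Fin d) (Fin d) ℂ)) := fun i => by
    rw [hLt i, hσdef i, smul_smul, mul_assoc, mul_inv_cancel₀ (hpos i).ne', mul_one]
  have hLt_posSemidef_iff : ∀ i, (Lt i).PosSemidef ↔
      (1 - (d : ℝ) * lamMax i)⁻¹ ≤ t ∧ t ≤ (1 - (d : ℝ) * lamMin i)⁻¹ := fun i => by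
    rw [hLt_σ i, hlamMax i, hlamMin i]
    exact (hσ i).posSemidef_collinear_iff hd (hpos i) (hlamMin i ▸ (hgap i).1)
      (hlamMax i ▸ (hgap i).2) t
  simp only [hLt_posSemidef_iff, Finset.sup'_le_iff, Finset.le_inf'_iff, Finset.mem_univ,
    true_implies, forall_and]
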